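/- Let X be the solution of the recursive distributional equation X =_d √U·X + √U·(1−√U). Then the law of X has a Lebesgue density f satisfying f(t) = 0 for t < 0 or t > 1, and, for every t ∈ [0,1], f(t) = 2·∫_{p_t}^{t} g(x,t)·f(x) dx + ∫_{t}^{1} (g(x,t) − 1)·f(x) dx, where p_t := 2√t − 1 and g(x,t) := (1+x)/√((1+x)² − 4t) for x ∈ [0,1] and t < ((1+x)/2)². -/

import Mathlib

/-!
Write `V = √U`, so that `rdeMap (x, U) = (1 + x) V - V²`. For `x ∈ [0,1]` the tail
`P((1 + x) V - V² > t)` is read off from the two roots of the quadratic, and its right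
derivative gives an explicit density `rdeKernel x` of this law. A contraction argument
(`B (rdeMap (x, u)) ≤ √u · B x` for `B x = x - 1` and `B x = -x`) shows that a solution `μ` is
carried by `[0,1]`; it is therefore a mixture of these laws and has the density
`t ↦ ∫ rdeKernel x t dμ(x)`, a real version `F` of which is a.e. a fixed point of the integral
operator. Then `f = 1_[0,1] · rdeOperator F` agrees with `F` a.e., so it is again a density of
`μ`, and since `rdeOperator` only depends on the a.e. class of its argument, `f` satisfies the
integral equation at every point of `[0,1]`.
-/

open MeasureTheory

noncomputable section

/-- The uniform distribution on `[0,1]`. -/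
def unif : Measure ℝ := volume.restrict (Set.Icc 0 1)

/-- The map `(x, u) ↦ √u·x + √u·(1 − √u)`. -/
def rdeMap (q : ℝ × ℝ) : ℝ :=
  Real.sqrt q.2 * q.1 + Real.sqrt q.2 * (1 - Real.sqrt q.2)

/-- `μ` is a (probability) solution of the recursive distributional equation
`X =_d √U·X + √U·(1 − √U)` with `X, U` independent and `U` uniform on `[0,1]`. -/
def IsRDESolution (μ : Measure ℝ) : Prop :=
  IsProbabilityMeasure μ ∧ Measure.map rdeMap (μ.prod unif) = μ

/-- The function `g(x,t) = (1+x)/√((1+x)² − 4t)`. -/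
def gdens (x t : ℝ) : ℝ := (1 + x) / Real.sqrt ((1 + x) ^ 2 - 4 * t)

/-- `f` is the version of the Lebesgue density of `μ` which vanishes outside `[0,1]` and
satisfies the integral equation
`f(t) = 2·∫_{2√t−1}^{t} g(x,t)·f(x) dx + ∫_{t}^{1} (g(x,t) − 1)·f(x) dx` on `[0,1]`. -/
def IsRDEDensity (μ : Measure ℝ) (f : ℝ → ℝ) : Prop :=
  Measurable f ∧ (∀ t, 0 ≤ f t) ∧
  μ = volume.withDensity (fun t => ENNReal.ofReal (f t)) ∧
  (∀ t : ℝ, t < 0 ∨ 1 < t → f t = 0) ∧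
  ∀ t ∈ Set.Icc (0 : ℝ) 1,
    f t = 2 * (∫ x in (2 * Real.sqrt t - 1)..t, gdens x t * f x)
          + ∫ x in t..(1 : ℝ), (gdens x t - 1) * f x

open Set Filter Topology
open scoped ENNReal

theorem lintegral_Ioc_ofReal_eq_sub_of_hasDeriv_right {g g' : ℝ → ℝ} {a b : ℝ}
    (hab : a ≤ b) (hcont : ContinuousOn g (Icc a b))
    (hderiv : ∀ x ∈ Ioo a b, HasDerivWithinAt g (g' x) (Ioi x) x)
    (hpos : ∀ x ∈ Ioo a b, 0 ≤ g' x) :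
    ∫⁻ x in Ioc a b, ENNReal.ofReal (g' x) = ENNReal.ofReal (g b - g a) := by
  have hint := intervalIntegral.integrableOn_deriv_right_of_nonneg hcont hderiv hpos
  have hpos' : 0 ≤ᵐ[volume.restrict (Ioc a b)] g' := by
    rw [← Measure.restrict_congr_set Ioo_ae_eq_Ioc]
    exact (ae_restrict_mem measurableSet_Ioo).mono hpos
  rw [← intervalIntegral.integral_eq_sub_of_hasDeriv_right_of_le hab hcont hderiv
      ((intervalIntegrable_iff_integrableOn_Ioc_of_le hab).mpr hint),
    intervalIntegral.integral_of_le hab, ofReal_integral_eq_lintegral_ofReal hint hpos']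

theorem measurable_intervalIntegral_of_uncurry {f : ℝ → ℝ → ℝ}
    (hf : Measurable (Function.uncurry f))
    {a b : ℝ → ℝ} (ha : Measurable a) (hb : Measurable b) :
    Measurable fun t => ∫ x in a t..b t, f t x := by
  have hIoc : ∀ a b : ℝ → ℝ, Measurable a → Measurable b →
      Measurable fun t => ∫ x in Ioc (a t) (b t), f t x := by
    intro a b ha hb
    have hs : MeasurableSet {p : ℝ × ℝ | p.2 ∈ Ioc (a p.1) (b p.1)} :=
      (measurableSet_lt (ha.comp measurable_fst) measurable_snd).inter
        (measurableSet_le measurable_snd (hb.comp measurable_fst))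
    convert ((hf.indicator hs).stronglyMeasurable.integral_prod_right' (ν := volume)).measurable
      using 2 with t
    rw [← integral_indicator measurableSet_Ioc]
    rfl
  exact (hIoc a b ha hb).sub (hIoc b a hb ha)

theorem map_prod_eq_withDensity_lintegral {α β γ : Type*} [MeasurableSpace α]
    [MeasurableSpace β] [MeasurableSpace γ] {μ : Measure α} {ν : Measure β} {ρ : Measure γ}
    [SFinite μ] [SFinite ν] [SFinite ρ] {T : α × β → γ} (hT : Measurable T)
    {k : α → γ → ℝ≥0∞} (hk : Measurable (Function.uncurry k))
    (hlaw : ∀ᵐ x ∂μ, ν.map (fun u => T (x, u)) = ρ.withDensity (k x)) :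
    (μ.prod ν).map T = ρ.withDensity fun t => ∫⁻ x, k x t ∂μ := by
  ext s hs
  rw [Measure.map_apply hT hs, Measure.prod_apply (hT hs), withDensity_apply _ hs]
  calc ∫⁻ x, ν (Prod.mk x ⁻¹' (T ⁻¹' s)) ∂μ
      = ∫⁻ x, ∫⁻ t in s, k x t ∂ρ ∂μ := by
        refine lintegral_congr_ae (hlaw.mono fun x hx => ?_)
        dsimp only
        rw [← withDensity_apply _ hs, ← hx,
          Measure.map_apply (f := fun u => T (x, u)) (hT.comp measurable_prodMk_left) hs]
        rfl
    _ = ∫⁻ t in s, ∫⁻ x, k x t ∂μ ∂ρ := lintegral_lintegral_swap hk.aemeasurable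

theorem exists_density_ae_eq_integral_kernel {α : Type*} [MeasurableSpace α] {ρ : Measure α}
    [SFinite ρ] {μ : Measure α} [IsFiniteMeasure μ] {K : α → α → ℝ}
    (hK : Measurable (Function.uncurry K)) (hK0 : ∀ x t, 0 ≤ K x t)
    (hμ : μ = ρ.withDensity fun t => ∫⁻ x, ENNReal.ofReal (K x t) ∂μ) :
    ∃ F : α → ℝ, Measurable F ∧ (∀ t, 0 ≤ F t) ∧
      μ = ρ.withDensity (fun t => ENNReal.ofReal (F t)) ∧
      ∀ᵐ t ∂ρ, Integrable (fun x => K x t * F x) ρ ∧ F t = ∫ x, K x t * F x ∂ρ := by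
  set f₀ : α → ℝ≥0∞ := fun t => ∫⁻ x, ENNReal.ofReal (K x t) ∂μ
  have hf₀ : Measurable f₀ := (hK.ennreal_ofReal.comp measurable_swap).lintegral_prod_right'
  have hfin : ∀ᵐ t ∂ρ, f₀ t < ∞ := by
    refine ae_lt_top hf₀ ?_
    rw [← setLIntegral_univ, ← withDensity_apply _ MeasurableSet.univ, ← hμ]
    exact measure_ne_top μ univ
  set F : α → ℝ := fun t => (f₀ t).toReal
  have hF : Measurable F := hf₀.ennreal_toReal
  have hμF : μ = ρ.withDensity fun t => ENNReal.ofReal (F t) :=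
    hμ.trans (withDensity_congr_ae (ofReal_toReal_ae_eq hfin).symm)
  refine ⟨F, hF, fun t => ENNReal.toReal_nonneg, hμF, ?_⟩
  filter_upwards [hfin] with t ht
  have hKt : Measurable fun x => K x t := hK.comp (measurable_id.prodMk measurable_const)
  have hKF : Measurable fun x => K x t * F x := hKt.mul hF
  have hKF0 : 0 ≤ᵐ[ρ] fun x => K x t * F x :=
    ae_of_all _ fun x => mul_nonneg (hK0 x t) ENNReal.toReal_nonneg
  have hlin : f₀ t = ∫⁻ x, ENNReal.ofReal (K x t * F x) ∂ρ := by
    change ∫⁻ x, ENNReal.ofReal (K x t) ∂μ = _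
    rw [hμF, lintegral_withDensity_eq_lintegral_mul _ hF.ennreal_ofReal hKt.ennreal_ofReal]
    simp_rw [Pi.mul_apply, ENNReal.ofReal_mul (hK0 _ t), mul_comm]
  refine ⟨⟨hKF.aestronglyMeasurable, (hasFiniteIntegral_iff_ofReal hKF0).mpr (hlin ▸ ht)⟩,
    ?_⟩
  rw [integral_eq_lintegral_of_nonneg_ae hKF0 hKF.aestronglyMeasurable, ← hlin]

theorem ae_eq_zero_of_withDensity_ofReal_null {α : Type*} [MeasurableSpace α] {ρ : Measure α}
    {F : α → ℝ} (hF : Measurable F) (hF0 : ∀ t, 0 ≤ F t) {s : Set α}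
    (hs : MeasurableSet s)
    (hnull : ρ.withDensity (fun t => ENNReal.ofReal (F t)) s = 0) :
    ∀ᵐ t ∂ρ, t ∈ s → F t = 0 := by
  rw [withDensity_apply _ hs, lintegral_eq_zero_iff hF.ennreal_ofReal] at hnull
  filter_upwards [ae_imp_of_ae_restrict hnull] with t ht hts
  exact le_antisymm (ENNReal.ofReal_eq_zero.mp (ht hts)) (hF0 t)

namespace RDE

lemma unif_Icc_compl : unif (Icc 0 1)ᶜ = 0 := by
  rw [unif, Measure.restrict_apply' measurableSet_Icc, compl_inter_self, measure_empty]

lemma unif_Ioi {c : ℝ} (h0 : 0 ≤ c) : unif (Ioi c) = ENNReal.ofReal (1 - c) := by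
  rw [unif, Measure.restrict_apply' measurableSet_Icc,
    show Ioi c ∩ Icc 0 1 = Ioc c 1 by ext; simp; grind, Real.volume_Ioc]

lemma unif_Iic {c : ℝ} (h1 : c ≤ 1) : unif (Iic c) = ENNReal.ofReal c := by
  rw [unif, Measure.restrict_apply' measurableSet_Icc,
    show Iic c ∩ Icc 0 1 = Icc 0 c by ext; simp; grind, Real.volume_Icc, sub_zero]

instance : IsProbabilityMeasure unif := ⟨by simp [unif]⟩

/-- If `B (T (x, u)) > a` then `B x > a`, and even `B x > 2a` when `u ≤ 1/4`; hence
`μ {a < B} ≤ ¾ μ {a < B} + ¼ μ {2a < B}`. -/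
theorem measure_lt_le_measure_two_mul_lt {α : Type*} [MeasurableSpace α] {μ : Measure α}
    [IsFiniteMeasure μ] {T : α × ℝ → α} (hT : Measurable T)
    (hμ : (μ.prod unif).map T = μ) {B : α → ℝ} (hB : Measurable B)
    (hBT : ∀ x, ∀ u ∈ Icc (0 : ℝ) 1, B (T (x, u)) ≤ √u * B x)
    {a : ℝ} (ha : 0 < a) : μ {x | a < B x} ≤ μ {x | 2 * a < B x} := by
  have hcover : T ⁻¹' {x | a < B x} ⊆ {x | a < B x} ×ˢ Ioi (1 / 4) ∪
      {x | 2 * a < B x} ×ˢ Iic (1 / 4) ∪ univ ×ˢ (Icc 0 1)ᶜ := by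
    rintro ⟨x, u⟩ (h : a < B (T (x, u)))
    by_cases hu : u ∈ Icc (0 : ℝ) 1
    · have hBT := hBT x u hu
      have hs0 := Real.sqrt_nonneg u
      have hs1 : √u ≤ 1 := Real.sqrt_le_one.mpr hu.2
      rcases le_or_gt u (1 / 4) with hu4 | hu4
      · have hs4 : √u ≤ 1 / 2 := (Real.sqrt_le_left (by norm_num)).mpr (by linarith)
        exact Or.inl (Or.inr ⟨show 2 * a < B x by nlinarith, hu4⟩)
      · exact Or.inl (Or.inl ⟨show a < B x by nlinarith, hu4⟩)
    · exact Or.inr ⟨trivial, hu⟩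
  have hsplit : μ {x | a < B x} ≤
      μ {x | a < B x} * ENNReal.ofReal (3 / 4) + μ {x | 2 * a < B x} * ENNReal.ofReal (1 / 4) :=
    calc μ {x | a < B x} = (μ.prod unif) (T ⁻¹' {x | a < B x}) := by
          rw [← Measure.map_apply hT (measurableSet_lt measurable_const hB), hμ]
      _ ≤ (μ.prod unif) ({x | a < B x} ×ˢ Ioi (1 / 4))
            + (μ.prod unif) ({x | 2 * a < B x} ×ˢ Iic (1 / 4))
            + (μ.prod unif) (univ ×ˢ (Icc 0 1)ᶜ) :=
          (measure_mono hcover).trans <| (measure_union_le _ _).trans <| by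
            gcongr; exact measure_union_le _ _
      _ = _ := by
          rw [Measure.prod_prod, Measure.prod_prod, Measure.prod_prod, unif_Icc_compl,
            unif_Ioi (by norm_num), unif_Iic (by norm_num), mul_zero, add_zero]
          norm_num
  set m := μ {x | a < B x}
  have hquarter : m * ENNReal.ofReal (1 / 4) + m * ENNReal.ofReal (3 / 4)
      ≤ μ {x | 2 * a < B x} * ENNReal.ofReal (1 / 4) + m * ENNReal.ofReal (3 / 4) := by
    rwa [← mul_add, ← ENNReal.ofReal_add (by norm_num) (by norm_num),
      show (1 / 4 + 3 / 4 : ℝ) = 1 by norm_num, ENNReal.ofReal_one, mul_one,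
      add_comm (μ {x | 2 * a < B x} * _)]
  exact (ENNReal.mul_le_mul_iff_left (by norm_num) (by finiteness)).mp
    (ENNReal.le_of_add_le_add_right (by finiteness) hquarter)

theorem measure_pos_eq_zero_of_contraction {α : Type*} [MeasurableSpace α] {μ : Measure α}
    [IsFiniteMeasure μ] {T : α × ℝ → α} (hT : Measurable T)
    (hμ : (μ.prod unif).map T = μ) {B : α → ℝ} (hB : Measurable B)
    (hBT : ∀ x, ∀ u ∈ Icc (0 : ℝ) 1, B (T (x, u)) ≤ √u * B x) :
    μ {x | 0 < B x} = 0 := by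
  have hlevel : ∀ a : ℝ, 0 < a → μ {x | a < B x} = 0 := by
    intro a ha
    have hpow : ∀ n : ℕ, μ {x | a < B x} ≤ μ {x | 2 ^ n * a < B x} := by
      intro n
      induction n with
      | zero => simp
      | succ n ih =>
        refine ih.trans ?_
        rw [pow_succ, mul_comm _ 2, mul_assoc]
        exact measure_lt_le_measure_two_mul_lt hT hμ hB hBT (by positivity)
    have hanti : Antitone fun n : ℕ => {x | 2 ^ n * a < B x} := fun n k hnk x hx =>
      lt_of_le_of_lt (mul_le_mul_of_nonneg_right (pow_le_pow_right₀ one_le_two hnk) ha.le) hx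
    have hempty : ⋂ n : ℕ, {x | 2 ^ n * a < B x} = ∅ := by
      refine eq_empty_of_forall_notMem fun x hx => ?_
      obtain ⟨n, hn⟩ := pow_unbounded_of_one_lt (B x / a) one_lt_two
      have := mem_iInter.mp hx n
      rw [div_lt_iff₀ ha] at hn
      exact (lt_asymm hn this)
    have htend := tendsto_measure_iInter_atTop
      (fun n => (measurableSet_lt measurable_const hB).nullMeasurableSet) hanti
      ⟨0, measure_ne_top μ _⟩
    rw [hempty, measure_empty] at htend
    exact le_antisymm (ge_of_tendsto' htend hpow) zero_le
  refine measure_mono_null (fun x (hx : 0 < B x) => ?_)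
    (measure_iUnion_null fun n : ℕ => hlevel (1 / (n + 1)) (by positivity))
  obtain ⟨n, hn⟩ := exists_nat_one_div_lt hx
  exact mem_iUnion.mpr ⟨n, hn⟩

lemma measurable_rdeMap : Measurable rdeMap := by
  unfold rdeMap; fun_prop

lemma rdeMap_eq (x u : ℝ) : rdeMap (x, u) = (1 + x) * √u - √u ^ 2 := by
  simp only [rdeMap]; ring

theorem ae_mem_Icc_of_isRDESolution {μ : Measure ℝ} (hμ : IsRDESolution μ) :
    ∀ᵐ x ∂μ, x ∈ Icc (0 : ℝ) 1 := by
  obtain ⟨_, hfix⟩ := hμ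
  have hupper : μ {x | 0 < x - 1} = 0 :=
    measure_pos_eq_zero_of_contraction measurable_rdeMap hfix (by fun_prop) fun x u _ => by
      nlinarith [rdeMap_eq x u, sq_nonneg (1 - √u)]
  have hlower : μ {x | 0 < -x} = 0 :=
    measure_pos_eq_zero_of_contraction measurable_rdeMap hfix (by fun_prop) fun x u hu => by
      nlinarith [rdeMap_eq x u, Real.sqrt_nonneg u, Real.sqrt_le_one.mpr hu.2]
  refine measure_mono_null (fun x (hx : x ∉ Icc 0 1) => ?_) (measure_union_null hlower hupper)
  rw [mem_Icc, not_and_or, not_le, not_le] at hx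
  rcases hx with hx | hx
  · exact Or.inl (show 0 < -x by linarith)
  · exact Or.inr (show 0 < x - 1 by linarith)

def lowerRoot (x t : ℝ) : ℝ := (1 + x - √((1 + x) ^ 2 - 4 * t)) / 2

def upperRoot (x t : ℝ) : ℝ := (1 + x + √((1 + x) ^ 2 - 4 * t)) / 2

lemma lt_mul_sub_sq_iff (x t v : ℝ) :
    t < (1 + x) * v - v ^ 2 ↔ lowerRoot x t < v ∧ v < upperRoot x t := by
  unfold lowerRoot upperRoot
  rcases le_or_gt ((1 + x) ^ 2 - 4 * t) 0 with hD | hD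
  · rw [Real.sqrt_eq_zero'.mpr hD]
    constructor
    · intro h; nlinarith [sq_nonneg (v - (1 + x) / 2)]
    · rintro ⟨h1, h2⟩; linarith
  · have hσ := Real.sq_sqrt hD.le
    have hσ0 := Real.sqrt_pos.mpr hD
    set σ := √((1 + x) ^ 2 - 4 * t)
    have hfactor : (1 + x) * v - v ^ 2 - t = (v - (1 + x - σ) / 2) * ((1 + x + σ) / 2 - v) := by
      nlinarith
    rw [← sub_pos, hfactor, mul_pos_iff, sub_pos, sub_pos, sub_neg, sub_neg]
    constructor
    · rintro (h | ⟨h1, h2⟩)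
      · exact h
      · linarith
    · exact Or.inl

/-- Since `√` vanishes on negative arguments, both roots equal `(1 + x) / 2` once
`(1 + x)² ≤ 4t`, so this single formula gives `P(rdeMap (x, U) > t)` for every `t`. -/
def survival (x t : ℝ) : ℝ := min (upperRoot x t) 1 ^ 2 - max (lowerRoot x t) 0 ^ 2

lemma unif_setOf_lt_rdeMap {x : ℝ} (hx : -1 < x) (t : ℝ) :
    unif {u | t < rdeMap (x, u)} = ENNReal.ofReal (survival x t) := by
  set a := max (lowerRoot x t) 0
  set b := min (upperRoot x t) 1
  have ha : 0 ≤ a := le_max_right _ _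
  have hb : 0 < b :=
    lt_min (by unfold upperRoot; linarith [Real.sqrt_nonneg ((1 + x) ^ 2 - 4 * t)]) one_pos
  have hb1 : b ^ 2 ≤ 1 := pow_le_one₀ hb.le (min_le_right _ _)
  have hset : {u | t < rdeMap (x, u)} ∩ Ioo 0 1 = Ioo (a ^ 2) (b ^ 2) := by
    ext u
    simp only [mem_inter_iff, mem_ofPred_eq, mem_Ioo, rdeMap_eq, lt_mul_sub_sq_iff,
      ← Real.lt_sqrt ha, ← Real.sqrt_lt' hb, a, b, max_lt_iff, lt_min_iff, Real.sqrt_pos]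
    constructor
    · rintro ⟨⟨hlo, hhi⟩, hu0, hu1⟩
      exact ⟨⟨hlo, hu0⟩, hhi, (Real.sqrt_lt' one_pos).mpr (by simpa using hu1)⟩
    · rintro ⟨⟨hlo, hu0⟩, hhi, hs1⟩
      exact ⟨⟨hlo, hhi⟩, hu0, by simpa using (Real.sqrt_lt' one_pos).mp hs1⟩
  rw [unif, ← Measure.restrict_congr_set Ioo_ae_eq_Icc, Measure.restrict_apply' measurableSet_Ioo,
    hset, Real.volume_Ioo]
  rfl

lemma survival_of_nonpos {x t : ℝ} (hx : 0 ≤ x) (ht : t ≤ 0) : survival x t = 1 := by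
  have hσ : 1 + x ≤ √((1 + x) ^ 2 - 4 * t) := Real.le_sqrt_of_sq_le (by linarith)
  rw [survival, min_eq_right (by unfold upperRoot; linarith),
    max_eq_right (by unfold lowerRoot; linarith)]
  norm_num

lemma survival_of_nonneg_of_le {x t : ℝ} (ht : 0 ≤ t) (htx : t ≤ x) :
    survival x t = 1 - lowerRoot x t ^ 2 := by
  have hσ₁ : 1 - x ≤ √((1 + x) ^ 2 - 4 * t) := Real.le_sqrt_of_sq_le (by linarith)
  have hσ₂ : √((1 + x) ^ 2 - 4 * t) ≤ 1 + x :=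
    Real.sqrt_le_iff.mpr ⟨by linarith, by linarith⟩
  rw [survival, min_eq_right (by unfold upperRoot; linarith),
    max_eq_left (by unfold lowerRoot; linarith)]
  norm_num

lemma survival_of_le {x t : ℝ} (hx : x ∈ Icc 0 1) (hxt : x ≤ t) :
    survival x t = (1 + x) * √((1 + x) ^ 2 - 4 * t) := by
  have hσ₁ : √((1 + x) ^ 2 - 4 * t) ≤ 1 - x :=
    Real.sqrt_le_iff.mpr ⟨by linarith [hx.2], by linarith⟩
  have hσ₂ : √((1 + x) ^ 2 - 4 * t) ≤ 1 + x :=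
    Real.sqrt_le_iff.mpr ⟨by linarith [hx.1], by linarith [hx.1]⟩
  rw [survival, min_eq_left (by unfold upperRoot; linarith),
    max_eq_left (by unfold lowerRoot; linarith)]
  unfold upperRoot lowerRoot
  ring

lemma survival_nonneg {x : ℝ} (hx : x ∈ Icc 0 1) (t : ℝ) : 0 ≤ survival x t := by
  have hσ := Real.sqrt_nonneg ((1 + x) ^ 2 - 4 * t)
  refine sub_nonneg.mpr (pow_le_pow_left₀ (le_max_right _ _)
    (max_le (le_min ?_ ?_) (le_min ?_ zero_le_one)) 2)
  all_goals simp only [lowerRoot, upperRoot]; linarith [hx.1, hx.2]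

lemma continuous_survival (x : ℝ) : Continuous (survival x) := by
  unfold survival lowerRoot upperRoot; fun_prop

def rdeKernel (x t : ℝ) : ℝ :=
  if 0 ≤ t then (Ioc (2 * √t - 1) t).indicator (fun y => 2 * gdens y t) x
    + (Ioc t 1).indicator (fun y => gdens y t - 1) x
  else 0

lemma gdens_nonneg {x : ℝ} (hx : -1 ≤ x) (t : ℝ) : 0 ≤ gdens x t :=
  div_nonneg (by linarith) (Real.sqrt_nonneg _)

lemma one_le_gdens {x t : ℝ} (ht : 0 ≤ t) (htx : t < x) : 1 ≤ gdens x t := by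
  have hD : 0 < (1 + x) ^ 2 - 4 * t := by nlinarith [sq_nonneg (1 - x)]
  rw [gdens, one_le_div (Real.sqrt_pos.mpr hD)]
  exact Real.sqrt_le_iff.mpr ⟨by linarith, by linarith⟩

lemma rdeKernel_nonneg (x t : ℝ) : 0 ≤ rdeKernel x t := by
  unfold rdeKernel
  split_ifs with ht
  · refine add_nonneg (indicator_nonneg (fun y hy => ?_) _) (indicator_nonneg (fun y hy => ?_) _)
    · linarith [gdens_nonneg (x := y) (by linarith [hy.1, Real.sqrt_nonneg t]) t]
    · linarith [one_le_gdens ht hy.1]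
  · exact le_rfl

lemma measurable_rdeKernel : Measurable (Function.uncurry rdeKernel) := by
  have hg : Measurable fun p : ℝ × ℝ => gdens p.1 p.2 := by unfold gdens; fun_prop
  unfold Function.uncurry rdeKernel
  simp only [indicator_apply, mem_Ioc]
  refine Measurable.ite (measurableSet_le measurable_const measurable_snd)
    (Measurable.add (Measurable.ite ?_ (hg.const_mul 2) measurable_const)
      (Measurable.ite ?_ (hg.sub measurable_const) measurable_const)) measurable_const
  · exact (measurableSet_lt (by fun_prop) measurable_fst).inter
      (measurableSet_le measurable_fst measurable_snd)
  · exact (measurableSet_lt measurable_snd measurable_fst).inter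
      (measurableSet_le measurable_fst measurable_const)

lemma hasDerivAt_sqrt_discr {x t : ℝ} (hD : 0 < (1 + x) ^ 2 - 4 * t) :
    HasDerivAt (fun s => √((1 + x) ^ 2 - 4 * s)) (-2 / √((1 + x) ^ 2 - 4 * t)) t := by
  have hlin : HasDerivAt (fun s => (1 + x) ^ 2 - 4 * s) (-4) t := by
    simpa using ((hasDerivAt_id t).const_mul 4).const_sub ((1 + x) ^ 2)
  convert hlin.sqrt hD.ne' using 1
  field_simp
  ring

lemma rdeKernel_of_neg (x : ℝ) {t : ℝ} (ht : t < 0) : rdeKernel x t = 0 :=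
  if_neg ht.not_ge

lemma rdeKernel_of_lt {x t : ℝ} (hx : x ≤ 1) (ht : 0 ≤ t) (htx : t < x) :
    rdeKernel x t = gdens x t - 1 := by
  simp [rdeKernel, ht, htx, hx, htx.not_ge]

lemma rdeKernel_of_le {x t : ℝ} (hx : 0 ≤ x) (hxt : x ≤ t) :
    rdeKernel x t = if 4 * t < (1 + x) ^ 2 then 2 * gdens x t else 0 := by
  have ht : 0 ≤ t := hx.trans hxt
  split_ifs with hD
  · have : 2 * √t - 1 < x := by
      linarith [(Real.sqrt_lt' (by linarith : 0 < (1 + x) / 2)).mpr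
        (show t < ((1 + x) / 2) ^ 2 by linarith)]
    simp [rdeKernel, ht, hxt, this]
  · have : x ≤ 2 * √t - 1 := by
      linarith [Real.le_sqrt_of_sq_le (show ((1 + x) / 2) ^ 2 ≤ t by linarith)]
    simp [rdeKernel, ht, hxt, this]

lemma hasDerivAt_one_sub_lowerRoot_sq {x t : ℝ} (hD : 0 < (1 + x) ^ 2 - 4 * t) :
    HasDerivAt (fun s => 1 - lowerRoot x s ^ 2) (-(gdens x t - 1)) t := by
  refine ((((hasDerivAt_sqrt_discr hD).const_sub (1 + x)).div_const 2).pow 2).const_sub 1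
    |>.congr_deriv ?_
  have := Real.sqrt_pos.mpr hD
  simp only [gdens]
  field_simp
  ring

lemma hasDerivAt_mul_sqrt_discr {x t : ℝ} (hD : 0 < (1 + x) ^ 2 - 4 * t) :
    HasDerivAt (fun s => (1 + x) * √((1 + x) ^ 2 - 4 * s)) (-(2 * gdens x t)) t := by
  refine ((hasDerivAt_sqrt_discr hD).const_mul (1 + x)).congr_deriv ?_
  simp only [gdens]
  ring

lemma hasDerivWithinAt_survival {x : ℝ} (hx : x ∈ Icc 0 1) (t : ℝ) :
    HasDerivWithinAt (survival x) (-rdeKernel x t) (Ioi t) t := by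
  rcases lt_or_ge t 0 with ht | ht
  · have hloc : survival x =ᶠ[𝓝 t] fun _ => 1 := by
      filter_upwards [Iio_mem_nhds ht] with s hs using survival_of_nonpos hx.1 hs.le
    rw [rdeKernel_of_neg x ht, neg_zero]
    exact ((hasDerivAt_const t (1 : ℝ)).congr_of_eventuallyEq hloc).hasDerivWithinAt
  rcases lt_or_ge t x with htx | hxt
  · rw [rdeKernel_of_lt hx.2 ht htx]
    refine (hasDerivAt_one_sub_lowerRoot_sq (by nlinarith [sq_nonneg (1 - x)])).hasDerivWithinAt
      |>.congr_of_eventuallyEq ?_ (survival_of_nonneg_of_le ht htx.le)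
    filter_upwards [Ioo_mem_nhdsGT htx] with s hs
    exact survival_of_nonneg_of_le (ht.trans hs.1.le) hs.2.le
  have hloc : survival x =ᶠ[𝓝[>] t] fun s => (1 + x) * √((1 + x) ^ 2 - 4 * s) := by
    filter_upwards [self_mem_nhdsWithin] with s (hs : t < s)
    exact survival_of_le hx (hxt.trans hs.le)
  rw [rdeKernel_of_le hx.1 hxt]
  split_ifs with hD
  · exact (hasDerivAt_mul_sqrt_discr (by linarith)).hasDerivWithinAt.congr_of_eventuallyEq hloc
      (survival_of_le hx hxt)
  · have hzero : ∀ s, t ≤ s → (1 + x) * √((1 + x) ^ 2 - 4 * s) = 0 := fun s hs => by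
      rw [Real.sqrt_eq_zero'.mpr (by linarith), mul_zero]
    rw [neg_zero]
    refine (hasDerivWithinAt_const t _ (0 : ℝ)).congr_of_eventuallyEq ?_
      ((survival_of_le hx hxt).trans (hzero t le_rfl))
    filter_upwards [hloc, self_mem_nhdsWithin] with s hs (hts : t < s)
    rw [hs, hzero s hts.le]

lemma lintegral_Ioc_rdeKernel {x : ℝ} (hx : x ∈ Icc 0 1) {a b : ℝ} (hab : a ≤ b) :
    ∫⁻ s in Ioc a b, ENNReal.ofReal (rdeKernel x s)
      = ENNReal.ofReal (survival x a - survival x b) := by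
  rw [lintegral_Ioc_ofReal_eq_sub_of_hasDeriv_right (g := fun s => -survival x s) hab
    (continuous_survival x).neg.continuousOn
    (fun s _ => (hasDerivWithinAt_survival hx s).neg.congr_deriv (neg_neg _))
    (fun s _ => rdeKernel_nonneg x s), neg_sub_neg]

lemma map_rdeMap_unif {x : ℝ} (hx : x ∈ Icc 0 1) :
    unif.map (fun u => rdeMap (x, u))
      = volume.withDensity fun t => ENNReal.ofReal (rdeKernel x t) := by
  have hY : Measurable fun u => rdeMap (x, u) := by unfold rdeMap; fun_prop
  have := unif.isFiniteMeasure_map fun u => rdeMap (x, u)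
  refine Measure.ext_of_Ioc _ _ fun a b hab => ?_
  have hdiff : (fun u => rdeMap (x, u)) ⁻¹' Ioc a b
      = {u | a < rdeMap (x, u)} \ {u | b < rdeMap (x, u)} := by
    ext u; simp [not_lt]
  rw [Measure.map_apply hY measurableSet_Ioc, withDensity_apply _ measurableSet_Ioc,
    lintegral_Ioc_rdeKernel hx hab.le, hdiff,
    measure_sdiff (show {u | b < rdeMap (x, u)} ⊆ {u | a < rdeMap (x, u)} from
      fun u (hu : b < rdeMap (x, u)) => hab.trans hu)
      (measurableSet_lt measurable_const hY).nullMeasurableSet (measure_ne_top _ _),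
    unif_setOf_lt_rdeMap (by linarith [hx.1]), unif_setOf_lt_rdeMap (by linarith [hx.1]),
    ENNReal.ofReal_sub _ (survival_nonneg hx b)]

def rdeOperator (F : ℝ → ℝ) (t : ℝ) : ℝ :=
  2 * (∫ x in (2 * √t - 1)..t, gdens x t * F x) + ∫ x in t..(1 : ℝ), (gdens x t - 1) * F x

lemma rdeOperator_congr_ae {F G : ℝ → ℝ} (h : F =ᵐ[volume] G) :
    rdeOperator F = rdeOperator G := by
  funext t
  have hcongr : ∀ (c : ℝ → ℝ) (a b : ℝ),
      ∫ x in a..b, c x * F x = ∫ x in a..b, c x * G x :=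
    fun c a b => intervalIntegral.integral_congr_ae (h.mono fun x hx _ => by rw [hx])
  simp only [rdeOperator, hcongr]

lemma measurable_rdeOperator {F : ℝ → ℝ} (hF : Measurable F) :
    Measurable (rdeOperator F) := by
  have hg : Measurable fun p : ℝ × ℝ => gdens p.2 p.1 := by unfold gdens; fun_prop
  exact (measurable_intervalIntegral_of_uncurry (f := fun t x => gdens x t * F x)
      (hg.mul (hF.comp measurable_snd)) (by fun_prop) measurable_id).const_mul 2 |>.add <|
    measurable_intervalIntegral_of_uncurry (f := fun t x => (gdens x t - 1) * F x)
      ((hg.sub (measurable_const (a := (1 : ℝ)))).mul (hF.comp measurable_snd)) measurable_id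
      measurable_const

lemma rdeOperator_eq_setIntegral (F : ℝ → ℝ) {t : ℝ} (ht : t ∈ Icc 0 1) :
    rdeOperator F t = (∫ x in Ioc (2 * √t - 1) t, rdeKernel x t * F x)
      + ∫ x in Ioc t 1, rdeKernel x t * F x := by
  have hp : 2 * √t - 1 ≤ t := by nlinarith [Real.sq_sqrt ht.1, sq_nonneg (√t - 1)]
  rw [rdeOperator, intervalIntegral.integral_of_le hp, intervalIntegral.integral_of_le ht.2,
    ← integral_const_mul]
  congr 1 <;> refine setIntegral_congr_fun measurableSet_Ioc fun x hx => ?_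
  · simp [rdeKernel, ht.1, hx, hx.2.not_gt]
    ring
  · simp [rdeKernel, ht.1, hx, hx.1.not_ge]

lemma rdeOperator_nonneg {F : ℝ → ℝ} (hF : ∀ x, 0 ≤ F x) {t : ℝ} (ht : t ∈ Icc 0 1) :
    0 ≤ rdeOperator F t := by
  rw [rdeOperator_eq_setIntegral F ht]
  exact add_nonneg
    (setIntegral_nonneg measurableSet_Ioc fun x _ => mul_nonneg (rdeKernel_nonneg x t) (hF x))
    (setIntegral_nonneg measurableSet_Ioc fun x _ => mul_nonneg (rdeKernel_nonneg x t) (hF x))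

lemma integral_rdeKernel_mul {F : ℝ → ℝ} {t : ℝ} (ht : t ∈ Icc 0 1)
    (hint : Integrable fun x => rdeKernel x t * F x) :
    ∫ x, rdeKernel x t * F x = rdeOperator F t := by
  rw [rdeOperator_eq_setIntegral F ht, ← setIntegral_union (Ioc_disjoint_Ioc_of_le le_rfl)
    measurableSet_Ioc hint.integrableOn hint.integrableOn,
    setIntegral_eq_integral_of_forall_compl_eq_zero]
  intro x hx
  simp only [mem_union, not_or] at hx
  simp [rdeKernel, hx.1, hx.2]

theorem isRDEDensity_indicator_rdeOperator {μ : Measure ℝ} {F : ℝ → ℝ} (hF : Measurable F)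
    (hF0 : ∀ t, 0 ≤ F t) (hμ : μ = volume.withDensity fun t => ENNReal.ofReal (F t))
    (hfix : F =ᵐ[volume] (Icc 0 1).indicator (rdeOperator F)) :
    IsRDEDensity μ ((Icc 0 1).indicator (rdeOperator F)) := by
  have hf : rdeOperator ((Icc 0 1).indicator (rdeOperator F)) = rdeOperator F :=
    rdeOperator_congr_ae hfix.symm
  refine ⟨(measurable_rdeOperator hF).indicator measurableSet_Icc,
    indicator_nonneg fun t ht => rdeOperator_nonneg hF0 ht,
    hμ.trans (withDensity_congr_ae (hfix.fun_comp ENNReal.ofReal)),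
    fun t ht => indicator_of_notMem (fun h => by rcases ht with ht | ht <;> linarith [h.1, h.2]) _,
    fun t ht => ?_⟩
  change _ = rdeOperator _ t
  rw [hf, indicator_of_mem ht]

end RDE

open RDE

/-- The solution `X` of the RDE `X =_d √U·X + √U·(1 − √U)` has a Lebesgue density `f`
vanishing outside `[0,1]` and satisfying the integral equation
`f(t) = 2·∫_{2√t−1}^{t} g(x,t)·f(x) dx + ∫_{t}^{1} (g(x,t) − 1)·f(x) dx` for `t ∈ [0,1]`,
where `g(x,t) = (1+x)/√((1+x)² − 4t)`. -/
theorem rde_density_exists (μ : Measure ℝ) (hμ : IsRDESolution μ) :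
    ∃ f : ℝ → ℝ, IsRDEDensity μ f := by
  have hsupp := ae_mem_Icc_of_isRDESolution hμ
  obtain ⟨_, hfix⟩ := hμ
  have hμK : μ = volume.withDensity fun t => ∫⁻ x, ENNReal.ofReal (rdeKernel x t) ∂μ := by
    conv_lhs => rw [← hfix]
    exact map_prod_eq_withDensity_lintegral measurable_rdeMap measurable_rdeKernel.ennreal_ofReal
      (hsupp.mono fun x hx => map_rdeMap_unif hx)
  obtain ⟨F, hF, hF0, hμF, hFK⟩ :=
    exists_density_ae_eq_integral_kernel measurable_rdeKernel rdeKernel_nonneg hμK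
  have hFout := ae_eq_zero_of_withDensity_ofReal_null hF hF0 measurableSet_Icc.compl
    (hμF ▸ ae_iff.mp hsupp)
  refine ⟨_, isRDEDensity_indicator_rdeOperator hF hF0 hμF ?_⟩
  filter_upwards [hFK, hFout] with t ⟨hint, hFt⟩ hout
  by_cases ht : t ∈ Icc (0 : ℝ) 1
  · rw [indicator_of_mem ht, ← integral_rdeKernel_mul ht hint, ← hFt]
  · rw [indicator_of_notMem ht, hout ht]
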